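/- arXiv:0705.0302 — 4 statements merged into one kernel-verified Lean document; each statement's English description precedes it below -/
import Mathlib

section
/- Suppose the form on Λ satisfies the Hodge index property. Let M, N ∈ Λ be linearly independent over ℚ with 0 < N² ≤ M² and M.N > 0. Then N² < M.N. Moreover, if in addition L := M + N satisfies L² ≥ 4·(M.N) − 2, then 2·(M.N + N²) ≤ L². -/
/-!
By the Hodge index property, independence of `M` and `N` makes Cauchy–Schwarz strict, so
`(N²)² ≤ M² N² < (M.N)²`, whence `N² < M.N`. Expanding `L² = M² + 2 M.N + N²`, the second
inequality is just `N² ≤ M²`.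
-/

theorem LinearMap.apply_add_add_of_symm {R M : Type*} [CommRing R] [AddCommGroup M] [Module R M]
    {b : M →ₗ[R] M →ₗ[R] R} (hsymm : ∀ x y : M, b x y = b y x) (x y : M) :
    b (x + y) (x + y) = b x x + 2 * b x y + b y y := by
  rw [map_add, map_add, LinearMap.add_apply, LinearMap.add_apply, hsymm y x]
  ring

theorem mul_lt_sq_of_hodge {R M : Type*} [CommRing R] [PartialOrder R] [AddCommGroup M]
    [Module R M] {b : M →ₗ[R] M →ₗ[R] R}
    (hodge : ∀ x y : M, 0 < b x x →
      b x x * b y y ≤ (b x y) ^ 2 ∧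
        (b x x * b y y = (b x y) ^ 2 → ¬ LinearIndependent R ![x, y]))
    {x y : M} (hx : 0 < b x x) (hind : LinearIndependent R ![x, y]) :
    b x x * b y y < (b x y) ^ 2 :=
  (hodge x y hx).1.lt_of_ne fun h => (hodge x y hx).2 h hind

theorem lt_of_mul_lt_sq {R : Type*} [CommRing R] [LinearOrder R] [IsStrictOrderedRing R]
    {m n c : R} (hn : 0 < n) (hnm : n ≤ m) (hc : 0 ≤ c) (h : m * n < c ^ 2) : n < c := by
  refine lt_of_pow_lt_pow_left₀ 2 hc ?_
  calc n ^ 2 = n * n := sq n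
    _ ≤ m * n := mul_le_mul_of_nonneg_right hnm hn.le
    _ < c ^ 2 := h

theorem stmt_3_general (Λ : Type*) [AddCommGroup Λ] [Module ℤ Λ]
    (b : Λ →ₗ[ℤ] Λ →ₗ[ℤ] ℤ) (hsymm : ∀ x y : Λ, b x y = b y x)
    (hodge : ∀ x y : Λ, 0 < b x x →
      b x x * b y y ≤ (b x y) ^ 2 ∧
        (b x x * b y y = (b x y) ^ 2 → ¬ LinearIndependent ℤ ![x, y]))
    (M N : Λ) (hind : LinearIndependent ℤ ![M, N])
    (hN : 0 < b N N) (hNM : b N N ≤ b M M) (hMN : 0 < b M N) :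
    b N N < b M N ∧
      (4 * b M N - 2 ≤ b (M + N) (M + N) →
        2 * (b M N + b N N) ≤ b (M + N) (M + N)) := by
  have hM : 0 < b M M := hN.trans_le hNM
  refine ⟨lt_of_mul_lt_sq hN hNM hMN.le (mul_lt_sq_of_hodge hodge hM hind), fun _ => ?_⟩
  rw [LinearMap.apply_add_add_of_symm hsymm]
  linarith

/-- Step in the proof of Lemma 3.2: if the form satisfies the Hodge index
property, `M, N` are linearly independent (over ℚ, equivalently over ℤ in a
free module), `0 < N² ≤ M²` and `M.N > 0`, then `N² < M.N`; and if moreover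
`L := M + N` satisfies `L² ≥ 4(M.N) − 2`, then `2(M.N + N²) ≤ L²`. -/
theorem stmt_3 (Λ : Type*) [AddCommGroup Λ] [Module ℤ Λ] [Module.Free ℤ Λ]
    (b : Λ →ₗ[ℤ] Λ →ₗ[ℤ] ℤ) (hsymm : ∀ x y : Λ, b x y = b y x)
    (hodge : ∀ x y : Λ, 0 < b x x →
      b x x * b y y ≤ (b x y) ^ 2 ∧
        (b x x * b y y = (b x y) ^ 2 → ¬ LinearIndependent ℤ ![x, y]))
    (M N : Λ) (hind : LinearIndependent ℤ ![M, N])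
    (hN : 0 < b N N) (hNM : b N N ≤ b M M) (hMN : 0 < b M N) :
    b N N < b M N ∧
      (4 * b M N - 2 ≤ b (M + N) (M + N) →
        2 * (b M N + b N N) ≤ b (M + N) (M + N)) :=
  stmt_3_general Λ b hsymm hodge M N hind hN hNM hMN
end

section
/- Let N, L ∈ V be linearly independent with L² > 0, and set d := N.(L−N). Suppose Γ = aN + bL (a, b ∈ ℚ) satisfies Γ² = −2, Γ.L = 0 and Γ.N ∈ {0, 1}. Then Γ.N = 1, a = −2 and b = 2(d+N²)/L², i.e. Γ = −2N + (2(d+N²)/L²)·L; consequently L − 2N − Γ = (1 − 2(d+N²)/L²)·L. -/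
/-!
Since `Γ.L = 0`, expanding `Γ² = Γ.(aN + bL)` gives `-2 = a · Γ.N`, so `Γ.N ≠ 0`, hence
`Γ.N = 1` and `a = -2`. Expanding `0 = Γ.L = a N.L + b L²` then determines `b`, and
`N.L = d + N²`.
-/

namespace LinearMap.BilinForm

variable {K V : Type*} [Field K] [AddCommGroup V] [Module K V] (B : LinearMap.BilinForm K V)
  {Γ N L : V} {a c : K}

theorem apply_self_eq_of_eq_add_of_apply_eq_zero (hΓ : Γ = a • N + c • L) (hΓL : B Γ L = 0) :
    B Γ Γ = a * B Γ N := by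
  calc B Γ Γ = B Γ (a • N + c • L) := congrArg (B Γ) hΓ
    _ = a * B Γ N := by simp [hΓL]

theorem coeff_eq_of_eq_add_of_apply_eq_zero (hΓ : Γ = a • N + c • L) (hΓL : B Γ L = 0)
    (hL : B L L ≠ 0) : c = -a * B N L / B L L := by
  have hexpand : a * B N L + c * B L L = 0 := by simpa [hΓ] using hΓL
  field_simp
  linear_combination hexpand

end LinearMap.BilinForm

open LinearMap.BilinForm in
theorem stmt_4_general (V : Type*) [AddCommGroup V] [Module ℚ V]
    (bf : V →ₗ[ℚ] V →ₗ[ℚ] ℚ)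
    (N L : V) (hL : 0 < bf L L)
    (d : ℚ) (hd : d = bf N (L - N))
    (Γ : V) (a c : ℚ) (hΓ : Γ = a • N + c • L)
    (hΓΓ : bf Γ Γ = -2) (hΓL : bf Γ L = 0)
    (hΓN : bf Γ N = 0 ∨ bf Γ N = 1) :
    bf Γ N = 1 ∧ a = -2 ∧ c = 2 * (d + bf N N) / bf L L ∧
      Γ = (-2 : ℚ) • N + (2 * (d + bf N N) / bf L L) • L ∧
      L - (2 : ℚ) • N - Γ = (1 - 2 * (d + bf N N) / bf L L) • L := by
  have hself : a * bf Γ N = -2 := by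
    rw [← hΓΓ, apply_self_eq_of_eq_add_of_apply_eq_zero bf hΓ hΓL]
  have hΓN_one : bf Γ N = 1 := hΓN.resolve_left fun h ↦ by norm_num [h] at hself
  have ha : a = -2 := by simpa [hΓN_one] using hself
  have hdN : d + bf N N = bf N L := by simp [hd]
  have hc : c = 2 * (d + bf N N) / bf L L := by
    rw [coeff_eq_of_eq_add_of_apply_eq_zero bf hΓ hΓL hL.ne', ha, hdN, neg_neg]
  refine ⟨hΓN_one, ha, hc, by rw [hΓ, ha, hc], ?_⟩
  rw [hΓ, ha, hc]
  module

/-- Lemma 3.2(i) of the paper (together with the identity used in its part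
(iv)): in `V = Pic(S_t) ⊗ ℚ`, if `N, L` are linearly independent, `L² > 0`,
`d := N.(L−N)`, and `Γ = aN + bL` satisfies `Γ² = −2`, `Γ.L = 0` and
`Γ.N ∈ {0, 1}`, then `Γ.N = 1`, `a = −2`, `b = 2(d+N²)/L²`, so that
`Γ = −2N + (2(d+N²)/L²)·L` and `L − 2N − Γ = (1 − 2(d+N²)/L²)·L`. -/
theorem stmt_4 (V : Type*) [AddCommGroup V] [Module ℚ V]
    (bf : V →ₗ[ℚ] V →ₗ[ℚ] ℚ) (hsymm : ∀ x y : V, bf x y = bf y x)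
    (N L : V) (hind : LinearIndependent ℚ ![N, L]) (hL : 0 < bf L L)
    (d : ℚ) (hd : d = bf N (L - N))
    (Γ : V) (a c : ℚ) (hΓ : Γ = a • N + c • L)
    (hΓΓ : bf Γ Γ = -2) (hΓL : bf Γ L = 0)
    (hΓN : bf Γ N = 0 ∨ bf Γ N = 1) :
    bf Γ N = 1 ∧ a = -2 ∧ c = 2 * (d + bf N N) / bf L L ∧
      Γ = (-2 : ℚ) • N + (2 * (d + bf N N) / bf L L) • L ∧
      L - (2 : ℚ) • N - Γ = (1 - 2 * (d + bf N N) / bf L L) • L :=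
  stmt_4_general V bf N L hL d hd Γ a c hΓ hΓΓ hΓL hΓN
end

section
/- Let N, L ∈ V be linearly independent with L² > 0, set d := N.(L−N), c := 2(d+N²)/L² and Γ := −2N + c·L, and assume Γ.N = 1. If A = xN + yL (x, y ∈ ℚ) satisfies Γ.A = 1 and A.(L−A) = d, then x = 1 and either y = 0 or y = 1 − c. (Thus, up to these two solutions, the decomposition L − Γ ∼ N + (L − N − Γ) is the unique decomposition of L − Γ with the prescribed intersection numbers.) -/
/-!
Write `n = N²`, `m = N.L`, `l = L²`. The definition of `c` says exactly `c l = 2m`, i.e. `Γ.L = 0`,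
so `Γ.A = x Γ.N + y Γ.L = x` and hence `x = 1`. For `A = N + yL` one then expands
`A.(L − A) = d + y l (1 − c − y)`, and `l ≠ 0` leaves the two roots `y = 0` and `y = 1 − c`.
-/

section

variable {V : Type*} [AddCommGroup V] [Module ℚ V] (bf : V →ₗ[ℚ] V →ₗ[ℚ] ℚ) {N L : V} {c : ℚ}

lemma mul_apply_self_eq_of_eq_div (hL : bf L L ≠ 0)
    (hc : c = 2 * (bf N (L - N) + bf N N) / bf L L) : c * bf L L = 2 * bf N L := by
  rw [hc, div_mul_cancel₀ _ hL, map_sub, sub_add_cancel]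

lemma apply_neg_two_smul_add_smul_self_eq_zero (hc : c * bf L L = 2 * bf N L) :
    bf ((-2 : ℚ) • N + c • L) L = 0 := by
  simp only [map_add, map_smul, LinearMap.add_apply, LinearMap.smul_apply, smul_eq_mul]
  linear_combination hc

lemma apply_smul_add_smul_right (Γ : V) (x y : ℚ) :
    bf Γ (x • N + y • L) = x * bf Γ N + y * bf Γ L := by
  simp only [map_add, map_smul, smul_eq_mul]

lemma apply_add_smul_sub_self (hLN : bf L N = bf N L) (hc : c * bf L L = 2 * bf N L) (y : ℚ) :
    bf (N + y • L) (L - (N + y • L)) = bf N (L - N) + y * bf L L * (1 - c - y) := by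
  simp only [map_add, map_sub, map_smul, LinearMap.add_apply, LinearMap.smul_apply, smul_eq_mul,
    hLN]
  linear_combination y * hc

end

theorem stmt_5_general (V : Type*) [AddCommGroup V] [Module ℚ V]
    (bf : V →ₗ[ℚ] V →ₗ[ℚ] ℚ) (hsymm : ∀ x y : V, bf x y = bf y x)
    (N L : V) (hL : 0 < bf L L)
    (d c : ℚ) (hd : d = bf N (L - N)) (hc : c = 2 * (d + bf N N) / bf L L)
    (Γ : V) (hΓ : Γ = (-2 : ℚ) • N + c • L) (hΓN : bf Γ N = 1)
    (A : V) (x y : ℚ) (hA : A = x • N + y • L)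
    (hΓA : bf Γ A = 1) (hAd : bf A (L - A) = d) :
    x = 1 ∧ (y = 0 ∨ y = 1 - c) := by
  subst hd
  have hcL : c * bf L L = 2 * bf N L := mul_apply_self_eq_of_eq_div bf hL.ne' hc
  have hΓL : bf Γ L = 0 := hΓ ▸ apply_neg_two_smul_add_smul_self_eq_zero bf hcL
  have hx : x = 1 := by
    rw [hA, apply_smul_add_smul_right, hΓN, hΓL] at hΓA
    linarith
  subst hx hA
  rw [one_smul, apply_add_smul_sub_self bf (hsymm L N) hcL, add_eq_left] at hAd
  rcases mul_eq_zero.mp hAd with hy | hy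
  · exact ⟨rfl, Or.inl ((mul_eq_zero.mp hy).resolve_right hL.ne')⟩
  · exact ⟨rfl, Or.inr (by linarith)⟩

/-- The computation proving Lemma 3.2(iii): with `N, L` linearly independent,
`L² > 0`, `d := N.(L−N)`, `c := 2(d+N²)/L²`, `Γ := −2N + cL` and `Γ.N = 1`,
if `A = xN + yL` satisfies `Γ.A = 1` and `A.(L−A) = d`, then `x = 1` and
either `y = 0` or `y = 1 − c`. -/
theorem stmt_5 (V : Type*) [AddCommGroup V] [Module ℚ V]
    (bf : V →ₗ[ℚ] V →ₗ[ℚ] ℚ) (hsymm : ∀ x y : V, bf x y = bf y x)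
    (N L : V) (hind : LinearIndependent ℚ ![N, L]) (hL : 0 < bf L L)
    (d c : ℚ) (hd : d = bf N (L - N)) (hc : c = 2 * (d + bf N N) / bf L L)
    (Γ : V) (hΓ : Γ = (-2 : ℚ) • N + c • L) (hΓN : bf Γ N = 1)
    (A : V) (x y : ℚ) (hA : A = x • N + y • L)
    (hΓA : bf Γ A = 1) (hAd : bf A (L - A) = d) :
    x = 1 ∧ (y = 0 ∨ y = 1 - c) :=
  stmt_5_general V bf hsymm N L hL d c hd hc Γ hΓ hΓN A x y hA hΓA hAd
end

section
/- Suppose the form on Λ satisfies the Hodge index property. Let D, Γ ∈ Λ with D² = n ≥ 2, Γ² = −2, Γ.D = 1, and set L := 2D + Γ. Let N ∈ Λ satisfy N² = n, (L−N)² ≥ N², 0 < N.(L−N) ≤ n + 1, Γ.N ≥ 0, and assume N and L−N are linearly independent over ℚ. Then N.(L−N) = n + 1, N.L = 2n + 1, and N = D. -/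
/-!
Write `m = N.(L−N)`. Since `N` and `L−N` are independent, the Hodge index inequality is strict,
so `n² ≤ n (L−N)² < m²`, and `0 < m ≤ n + 1` forces `m = n + 1`, i.e. `N.L = 2n + 1`. With
`d = N.D` and `g = Γ.N ≥ 0` this reads `2d + g = 2n + 1`. The Hodge inequality for `N, D` gives
`|d| ≥ n`, and applied to `N` and the vector `g D − d Γ ⟂ N` it rules out `d ≤ −n`; hence `d = n`.
Then equality holds in the Hodge inequality for `N, D`, so they are dependent, and comparing
`N.N = N.D` shows `N = D`.
-/

def HodgeIndex {R M : Type*} [CommRing R] [LinearOrder R] [AddCommGroup M] [Module R M]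
    (b : M →ₗ[R] M →ₗ[R] R) : Prop :=
  ∀ x y : M, 0 < b x x →
    b x x * b y y ≤ b x y ^ 2 ∧ (b x x * b y y = b x y ^ 2 → ¬ LinearIndependent R ![x, y])

namespace HodgeIndex

variable {R M : Type*} [CommRing R] [LinearOrder R] [AddCommGroup M] [Module R M]
  {b : M →ₗ[R] M →ₗ[R] R} {x y : M}

theorem mul_lt_sq_of_linearIndependent (hb : HodgeIndex b) (hx : 0 < b x x)
    (hxy : LinearIndependent R ![x, y]) : b x x * b y y < b x y ^ 2 :=
  (hb x y hx).1.lt_of_ne fun h ↦ (hb x y hx).2 h hxy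

variable [IsStrictOrderedRing R]

/-- This is `w.w ≤ 0` for `w = (x.v) u − (x.u) v`, which is orthogonal to `x`. -/
theorem sq_mul_add_sq_mul_le (hb : HodgeIndex b) (hsymm : ∀ u v : M, b u v = b v u)
    (hx : 0 < b x x) (u v : M) :
    b x v ^ 2 * b u u + b x u ^ 2 * b v v ≤ 2 * b x u * b x v * b u v := by
  set w := b x v • u - b x u • v
  have hxw : b x w = 0 := by simp only [w, map_sub, map_smul, smul_eq_mul]; ring
  have hw : b w w ≤ 0 := by
    have := (hb x w hx).1
    rw [hxw, zero_pow two_ne_zero] at this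
    exact nonpos_of_mul_nonpos_right this hx
  have hww : b w w = b x v ^ 2 * b u u + b x u ^ 2 * b v v - 2 * b x u * b x v * b u v := by
    simp only [w, map_sub, map_smul, LinearMap.sub_apply, LinearMap.smul_apply, smul_eq_mul,
      hsymm v u]
    ring
  linarith

theorem eq_of_apply_eq [Module.IsTorsionFree R M] (hb : HodgeIndex b) (hx : 0 < b x x)
    (hxx : b x x = b x y) (hyy : b y y = b x y) : x = y := by
  have hdep := (hb x y hx).2 (by rw [hyy, hxx, sq])
  obtain ⟨s, t, hst, hne⟩ : ∃ s t : R, s • x + t • y = 0 ∧ ¬ (s = 0 ∧ t = 0) := by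
    simpa [LinearIndependent.pair_iff] using hdep
  have ht : t = -s := by
    have hbx := congrArg (b x) hst
    simp only [map_add, map_smul, smul_eq_mul, map_zero, ← hxx] at hbx
    exact mul_right_cancel₀ hx.ne' (by linear_combination hbx)
  have hs : s ≠ 0 := fun hs ↦ hne ⟨hs, by simp [ht, hs]⟩
  refine smul_right_injective M hs ?_
  simpa [ht, ← sub_eq_add_neg, sub_eq_zero, smul_sub] using hst

end HodgeIndex

theorem Int.eq_of_two_mul_add_eq {n d g : ℤ} (hn : 0 ≤ n) (hg : 0 ≤ g)
    (hdg : 2 * d + g = 2 * n + 1) (hd : n ^ 2 ≤ d ^ 2) (hdisc : n * g ^ 2 ≤ 2 * d * (d + g)) :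
    d = n := by
  rcases le_or_gt n d with hnd | hdn
  · omega
  · have hd' : d ≤ -n := by nlinarith
    nlinarith [mul_pos (show 0 < -d by omega) (show 0 < d + g by omega),
      mul_nonneg hn (sq_nonneg g)]

/-- The case N² = k − 1 in the proof of Proposition 4.1: under the Hodge
index property, with `D² = n ≥ 2`, `Γ² = −2`, `Γ.D = 1`, `L := 2D + Γ`, if
`N² = n`, `(L−N)² ≥ N²`, `0 < N.(L−N) ≤ n + 1`, `Γ.N ≥ 0` and `N, L−N` are
linearly independent, then `N.(L−N) = n + 1`, `N.L = 2n + 1` and `N = D`. -/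
theorem stmt_8 (Λ : Type*) [AddCommGroup Λ] [Module ℤ Λ] [Module.Free ℤ Λ]
    (b : Λ →ₗ[ℤ] Λ →ₗ[ℤ] ℤ) (hsymm : ∀ x y : Λ, b x y = b y x)
    (hodge : ∀ x y : Λ, 0 < b x x →
      b x x * b y y ≤ (b x y) ^ 2 ∧
        (b x x * b y y = (b x y) ^ 2 → ¬ LinearIndependent ℤ ![x, y]))
    (D Γ : Λ) (n : ℤ) (hn : 2 ≤ n)
    (hDD : b D D = n) (hΓΓ : b Γ Γ = -2) (hΓD : b Γ D = 1)
    (L : Λ) (hL : L = (2 : ℤ) • D + Γ)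
    (N : Λ) (hNN : b N N = n) (hLN : b N N ≤ b (L - N) (L - N))
    (hpos : 0 < b N (L - N)) (hle : b N (L - N) ≤ n + 1)
    (hΓN : 0 ≤ b Γ N) (hind : LinearIndependent ℤ ![N, L - N]) :
    b N (L - N) = n + 1 ∧ b N L = 2 * n + 1 ∧ N = D := by
  have hb : HodgeIndex b := hodge
  have hNpos : 0 < b N N := by omega
  have hm : b N (L - N) = n + 1 := by
    have := hb.mul_lt_sq_of_linearIndependent hNpos hind
    rw [hNN] at this hLN
    nlinarith
  have hNL : b N L = 2 * n + 1 := by rw [map_sub, hNN] at hm; omega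
  have hdg : 2 * b N D + b Γ N = 2 * n + 1 := by
    rwa [hL, map_add, map_zsmul, smul_eq_mul, hsymm N Γ] at hNL
  have hND : b N D = n := by
    refine Int.eq_of_two_mul_add_eq (by omega) hΓN hdg ?_ ?_
    · simpa [hNN, hDD, sq] using (hodge N D hNpos).1
    · have := hb.sq_mul_add_sq_mul_le hsymm hNpos D Γ
      rw [hDD, hΓΓ, hsymm D Γ, hΓD, hsymm N Γ] at this
      linarith
  exact ⟨hm, hNL, hb.eq_of_apply_eq hNpos (hNN.trans hND.symm) (hDD.trans hND.symm)⟩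
end
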